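/- For every confidence parameter ρ ∈ [1/2, 1], there exists a randomized 1-selection mechanism with predictions (the ρ-permutation mechanism) that is impartial, ρ-consistent, and (1−ρ)-robust. -/

import Mathlib

/-- `E` has no self-loops. -/
def NoLoops {n : ℕ} (E : Finset (Fin n × Fin n)) : Prop := ∀ i, (i, i) ∉ E

/-- The indegree of vertex `i` in the graph with edge set `E`. -/
def indeg {n : ℕ} (E : Finset (Fin n × Fin n)) (i : Fin n) : ℕ :=
  (E.filter (fun e => e.2 = i)).card

/-- The total indegree of a set `S` of vertices. -/
def indegS {n : ℕ} (E : Finset (Fin n × Fin n)) (S : Finset (Fin n)) : ℕ :=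
  ∑ i ∈ S, indeg E i

/-- `Δ_k(G)`: the maximum total indegree of a set of `k` vertices. -/
def maxDeg {n : ℕ} (k : ℕ) (E : Finset (Fin n × Fin n)) : ℕ :=
  (Finset.powersetCard k Finset.univ).sup (indegS E)

/-- A (randomized) selection mechanism with predictions: for each `n`,
given a predicted set and a graph, it assigns a selection probability to each vertex. -/
abbrev Mech : Type :=
  ∀ n : ℕ, Finset (Fin n) → Finset (Fin n × Fin n) → Fin n → ℝ

/-- The probabilities lie in `[0,1]` and sum to at most `k` on every valid input. -/
def ValidMech (k : ℕ) (f : Mech) : Prop :=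
  ∀ (n : ℕ) (Sh : Finset (Fin n)) (E : Finset (Fin n × Fin n)),
    Sh.card = k → NoLoops E →
      (∀ i, 0 ≤ f n Sh E i ∧ f n Sh E i ≤ 1) ∧ (∑ i, f n Sh E i) ≤ (k : ℝ)

/-- Impartiality: the probability of selecting `i` does not depend on `i`'s outgoing edges. -/
def Impartial (k : ℕ) (f : Mech) : Prop :=
  ∀ (n : ℕ) (Sh : Finset (Fin n)) (E E' : Finset (Fin n × Fin n)) (i : Fin n),
    Sh.card = k → NoLoops E → NoLoops E' →
    E.filter (fun e => e.1 ≠ i) = E'.filter (fun e => e.1 ≠ i) →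
    f n Sh E i = f n Sh E' i

/-- `α`-consistency: an `α`-approximation whenever the prediction is accurate. -/
def Consistent (k : ℕ) (α : ℝ) (f : Mech) : Prop :=
  ∀ (n : ℕ) (Sh : Finset (Fin n)) (E : Finset (Fin n × Fin n)),
    Sh.card = k → NoLoops E → indegS E Sh = maxDeg k E →
    α * (maxDeg k E : ℝ) ≤ ∑ i, f n Sh E i * (indeg E i : ℝ)

/-- `β`-robustness: a `β`-approximation regardless of the prediction. -/
def Robust (k : ℕ) (β : ℝ) (f : Mech) : Prop :=
  ∀ (n : ℕ) (Sh : Finset (Fin n)) (E : Finset (Fin n × Fin n)),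
    Sh.card = k → NoLoops E →
    β * (maxDeg k E : ℝ) ≤ ∑ i, f n Sh E i * (indeg E i : ℝ)

namespace RhoPerm

variable {n : ℕ}

/-- number of in-edges of `u` from elements of `P`. -/
def scoreIn (E : Finset (Fin n × Fin n)) (P : List (Fin n)) (u : Fin n) : ℕ :=
  (P.filter (fun x => (x, u) ∈ E)).length

def runAux (E : Finset (Fin n × Fin n)) :
    List (Fin n) → List (Fin n) → Fin n → ℕ → Fin n × ℕ
  | [], _, c, s => (c, s)
  | u :: rest, seen, c, s =>
    if s ≤ scoreIn E (seen.filter (fun x => x ≠ c)) u then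
      runAux E rest (seen ++ [u]) u (scoreIn E seen u)
    else
      runAux E rest (seen ++ [u]) c s

def winner (E : Finset (Fin n × Fin n)) : List (Fin n) → Option (Fin n)
  | [] => none
  | u :: rest => some (runAux E rest [u] u 0).1

lemma scoreIn_append (E : Finset (Fin n × Fin n)) (P Q : List (Fin n)) (u : Fin n) :
    scoreIn E (P ++ Q) u = scoreIn E P u + scoreIn E Q u := by
  simp [scoreIn]

lemma scoreIn_reverse (E : Finset (Fin n × Fin n)) (P : List (Fin n)) (u : Fin n) :
    scoreIn E P.reverse u = scoreIn E P u := by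
  simp [scoreIn]

lemma scoreIn_filter_le (E : Finset (Fin n × Fin n)) (P : List (Fin n)) (q : Fin n → Bool)
    (u : Fin n) : scoreIn E (P.filter q) u ≤ scoreIn E P u := by
  unfold scoreIn
  exact ((P.filter_sublist (p := q)).filter _).length_le

lemma scoreIn_toFinset (E : Finset (Fin n × Fin n)) {P : List (Fin n)} (hP : P.Nodup)
    (u : Fin n) : scoreIn E P u = ((P.filter (fun x => (x, u) ∈ E)).toFinset).card := by
  rw [List.card_toFinset, (hP.filter _).dedup]
  rfl

lemma scoreIn_le_indeg (E : Finset (Fin n × Fin n)) {P : List (Fin n)} (hP : P.Nodup)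
    (u : Fin n) : scoreIn E P u ≤ indeg E u := by
  classical
  rw [scoreIn_toFinset E hP u, indeg]
  apply Finset.card_le_card_of_injOn (fun x => (x, u))
  · intro x hx
    simp only [Finset.mem_coe, List.mem_toFinset, List.mem_filter, decide_eq_true_eq] at hx
    simp [hx.2]
  · intro a _ b _ h
    exact ((Prod.mk.injEq _ _ _ _).mp h).1

lemma scoreIn_eq_indeg (E : Finset (Fin n × Fin n)) {P : List (Fin n)} (hP : P.Nodup)
    (u : Fin n) (hall : ∀ x, (x, u) ∈ E → x ∈ P) : scoreIn E P u = indeg E u := by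
  classical
  refine le_antisymm (scoreIn_le_indeg E hP u) ?_
  rw [scoreIn_toFinset E hP u, indeg]
  apply Finset.card_le_card_of_injOn (fun e => e.1)
  · intro e he
    simp only [Finset.mem_coe, Finset.mem_filter] at he
    have h2 : (e.1, u) ∈ E := by
      have : e = (e.1, u) := Prod.ext rfl he.2
      rw [← this]
      exact he.1
    exact List.mem_toFinset.mpr (List.mem_filter.mpr ⟨hall e.1 h2, by simpa using h2⟩)
  · intro a ha b hb h
    simp only [Finset.coe_filter, Set.mem_setOf_eq] at ha hb
    exact Prod.ext h (ha.2.trans hb.2.symm)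

lemma scoreIn_le_filter_add_one (E : Finset (Fin n × Fin n)) (c u : Fin n) :
    ∀ (P : List (Fin n)), P.Nodup →
      scoreIn E P u ≤ scoreIn E (P.filter (fun x => x ≠ c)) u + 1
  | [], _ => by simp [scoreIn]
  | x :: t, h => by
    have ht := (List.nodup_cons.mp h).2
    have hx := (List.nodup_cons.mp h).1
    by_cases hxc : x = c
    · subst hxc
      have h3 : t.filter (fun a => decide ((a, u) ∈ E) && !decide (a = x)) =
          t.filter (fun a => decide ((a, u) ∈ E)) := by
        apply List.filter_congr
        intro a ha
        have hax : a ≠ x := fun e => hx (e ▸ ha)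
        simp [hax]
      simp only [scoreIn, List.filter_cons, List.filter_filter, decide_not]
      by_cases hE : (x, u) ∈ E <;> simp [hE, h3] <;> omega
    · have IH := scoreIn_le_filter_add_one E c u t ht
      simp only [scoreIn, List.filter_cons, List.filter_filter, decide_not] at IH ⊢
      by_cases hE : (x, u) ∈ E <;>
        simp [hE, hxc, scoreIn, List.filter_filter, decide_not] at IH ⊢ <;> omega


lemma runAux_mem (E : Finset (Fin n × Fin n)) :
    ∀ (rest seen : List (Fin n)) (c : Fin n) (s : ℕ),
      (runAux E rest seen c s).1 = c ∨ (runAux E rest seen c s).1 ∈ rest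
  | [], _, _, _ => Or.inl rfl
  | u :: rest, seen, c, s => by
    rw [runAux]
    split
    · rcases runAux_mem E rest (seen ++ [u]) u (scoreIn E seen u) with h | h
      · exact Or.inr (by rw [h]; exact (List.mem_cons_self : u ∈ u :: rest))
      · exact Or.inr (List.mem_cons_of_mem u h)
    · rcases runAux_mem E rest (seen ++ [u]) c s with h | h
      · exact Or.inl h
      · exact Or.inr (List.mem_cons_of_mem u h)

lemma runAux_bound (E : Finset (Fin n × Fin n)) :
    ∀ (rest seen : List (Fin n)) (c : Fin n) (s : ℕ),
      (seen ++ rest).Nodup → s ≤ indeg E c →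
      s ≤ (runAux E rest seen c s).2 ∧
      (runAux E rest seen c s).2 ≤ indeg E (runAux E rest seen c s).1 ∧
      (∀ A (v : Fin n) B, rest = A ++ v :: B →
        scoreIn E (seen ++ A) v ≤ (runAux E rest seen c s).2)
  | [], seen, c, s => by
    intro _ hs
    refine ⟨le_rfl, hs, ?_⟩
    intro A v B hAB
    exact absurd hAB (by simp)
  | u :: rest, seen, c, s => by
    intro hnd hs
    have hnd' : ((seen ++ [u]) ++ rest).Nodup := by
      rwa [List.append_assoc, List.singleton_append]
    have hseen : seen.Nodup := (List.nodup_append.mp hnd).1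
    rw [runAux]
    split
    case isTrue hle =>
      have hs' : scoreIn E seen u ≤ indeg E u := scoreIn_le_indeg E hseen u
      obtain ⟨ih1, ih2, ih3⟩ := runAux_bound E rest (seen ++ [u]) u (scoreIn E seen u) hnd' hs'
      refine ⟨?_, ih2, ?_⟩
      · exact le_trans (le_trans hle (scoreIn_filter_le E seen _ u)) ih1
      · intro A v B hAB
        match A, hAB with
        | [], hAB =>
          have hv : v = u := by injection hAB with h1 _; exact h1.symm
          subst hv
          simpa using ih1
        | a :: A', hAB =>
          have h0 : u = a ∧ rest = A' ++ v :: B := by simpa using hAB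
          have := ih3 A' v B h0.2
          rw [List.append_assoc, List.singleton_append] at this
          rw [← h0.1]
          exact this
    case isFalse hgt =>
      obtain ⟨ih1, ih2, ih3⟩ := runAux_bound E rest (seen ++ [u]) c s hnd' hs
      refine ⟨ih1, ih2, ?_⟩
      intro A v B hAB
      match A, hAB with
      | [], hAB =>
        have hv : v = u := by injection hAB with h1 _; exact h1.symm
        subst hv
        have h1 : scoreIn E seen v ≤ scoreIn E (seen.filter (fun x => x ≠ c)) v + 1 :=
          scoreIn_le_filter_add_one E c v seen hseen
        have h2 : scoreIn E (seen.filter (fun x => x ≠ c)) v + 1 ≤ s := by omega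
        simpa using le_trans (le_trans h1 h2) ih1
      | a :: A', hAB =>
        have h0 : u = a ∧ rest = A' ++ v :: B := by simpa using hAB
        have := ih3 A' v B h0.2
        rw [List.append_assoc, List.singleton_append] at this
        rw [← h0.1]
        exact this

lemma winner_bound (E : Finset (Fin n × Fin n)) (L : List (Fin n)) (hN : L.Nodup)
    (A B : List (Fin n)) (v w : Fin n) (hL : L = A ++ v :: B)
    (hw : winner E L = some w) : scoreIn E A v ≤ indeg E w := by
  match A, hL with
  | [], hL =>
    simp only [scoreIn, List.filter_nil, List.length_nil]
    exact Nat.zero_le _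
  | a :: A', hL =>
    subst hL
    have hw2 : (runAux E (A' ++ v :: B) [a] a 0).1 = w := by
      simpa [winner] using hw
    obtain ⟨_, h2, h3⟩ := runAux_bound E (A' ++ v :: B) [a] a 0
      (by simpa using hN) (Nat.zero_le _)
    subst hw2
    exact le_trans (h3 A' v B rfl) h2

lemma scoreIn_congr {E E' : Finset (Fin n × Fin n)} {i : Fin n}
    (hEE : ∀ x u, x ≠ i → ((x, u) ∈ E ↔ (x, u) ∈ E')) {P : List (Fin n)}
    (hiP : i ∉ P) (u : Fin n) : scoreIn E P u = scoreIn E' P u := by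
  unfold scoreIn
  congr 1
  apply List.filter_congr
  intro x hx
  have hxi : x ≠ i := fun e => hiP (e ▸ hx)
  simp only [decide_eq_decide]
  exact hEE x u hxi

lemma runAux_imp {E E' : Finset (Fin n × Fin n)} {i : Fin n}
    (hEE : ∀ x u, x ≠ i → ((x, u) ∈ E ↔ (x, u) ∈ E')) :
    ∀ (rest seen : List (Fin n)) (c : Fin n) (s : ℕ),
      (seen ++ rest).Nodup → c ∈ seen → (i = c ∨ i ∉ seen) →
      ((runAux E rest seen c s).1 = i ↔ (runAux E' rest seen c s).1 = i)
  | [], seen, c, s => fun _ _ _ => Iff.rfl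
  | u :: rest, seen, c, s => by
    intro hnd hc hinv
    have hnd' : ((seen ++ [u]) ++ rest).Nodup := by
      rwa [List.append_assoc, List.singleton_append]
    have hurest : i ∈ seen → i ∉ u :: rest := by
      intro hi hmem
      exact (List.disjoint_of_nodup_append hnd) hi hmem
    rw [runAux, runAux]
    rcases hinv with hic | hins
    · -- i is the current candidate
      subst hic
      have hsc : scoreIn E (seen.filter (fun x => x ≠ i)) u =
          scoreIn E' (seen.filter (fun x => x ≠ i)) u := by
        apply scoreIn_congr hEE
        intro hmem
        simp only [List.mem_filter, decide_eq_true_eq] at hmem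
        exact hmem.2 rfl
      rw [← hsc]
      split
      · -- i is dethroned by u; i can never be selected afterwards
        have hi1 : (runAux E rest (seen ++ [u]) u (scoreIn E seen u)).1 ≠ i := by
          rcases runAux_mem E rest (seen ++ [u]) u (scoreIn E seen u) with h | h
          · rw [h]; intro h'
            exact hurest hc (h' ▸ (List.mem_cons_self : u ∈ u :: rest))
          · intro h'
            exact hurest hc (h' ▸ List.mem_cons_of_mem u h)
        have hi2 : (runAux E' rest (seen ++ [u]) u (scoreIn E' seen u)).1 ≠ i := by
          rcases runAux_mem E' rest (seen ++ [u]) u (scoreIn E' seen u) with h | h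
          · rw [h]; intro h'
            exact hurest hc (h' ▸ (List.mem_cons_self : u ∈ u :: rest))
          · intro h'
            exact hurest hc (h' ▸ List.mem_cons_of_mem u h)
        exact iff_of_false hi1 hi2
      · exact runAux_imp hEE rest (seen ++ [u]) i s hnd'
          (List.mem_append_left _ hc) (Or.inl rfl)
    · -- i not among the seen vertices
      have hic : i ≠ c := fun e => hins (e ▸ hc)
      have hsc : scoreIn E (seen.filter (fun x => x ≠ c)) u =
          scoreIn E' (seen.filter (fun x => x ≠ c)) u := by
        apply scoreIn_congr hEE
        intro hmem
        exact hins (List.mem_of_mem_filter hmem)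
      have hsc2 : scoreIn E seen u = scoreIn E' seen u := scoreIn_congr hEE hins u
      rw [← hsc, ← hsc2]
      split
      · -- u becomes the new candidate
        apply runAux_imp hEE rest (seen ++ [u]) u _ hnd'
          (List.mem_append_right _ (List.mem_singleton_self u))
        by_cases hiu : i = u
        · exact Or.inl hiu
        · exact Or.inr (by
            intro hmem
            rcases List.mem_append.mp hmem with h | h
            · exact hins h
            · exact hiu (List.mem_singleton.mp h))
      · -- the old candidate survives
        by_cases hiu : i = u
        · -- i = u failed to become candidate: i is never selected
          subst hiu
          have hi1 : (runAux E rest (seen ++ [i]) c s).1 ≠ i := by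
            rcases runAux_mem E rest (seen ++ [i]) c s with h | h
            · rw [h]; exact fun e => hic e.symm
            · intro h'
              have : (seen ++ [i]).Nodup ∧ _ := List.nodup_append.mp hnd' |>.imp id id
              exact (List.disjoint_of_nodup_append hnd') (List.mem_append_right _
                (List.mem_singleton_self i)) (h' ▸ h)
          have hi2 : (runAux E' rest (seen ++ [i]) c s).1 ≠ i := by
            rcases runAux_mem E' rest (seen ++ [i]) c s with h | h
            · rw [h]; exact fun e => hic e.symm
            · intro h'
              exact (List.disjoint_of_nodup_append hnd') (List.mem_append_right _
                (List.mem_singleton_self i)) (h' ▸ h)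
          exact iff_of_false hi1 hi2
        · apply runAux_imp hEE rest (seen ++ [u]) c s hnd'
            (List.mem_append_left _ hc)
          exact Or.inr (by
            intro hmem
            rcases List.mem_append.mp hmem with h | h
            · exact hins h
            · exact hiu (List.mem_singleton.mp h))

lemma winner_imp {E E' : Finset (Fin n × Fin n)} {i : Fin n}
    (hEE : ∀ x u, x ≠ i → ((x, u) ∈ E ↔ (x, u) ∈ E')) (L : List (Fin n)) (hN : L.Nodup) :
    (winner E L = some i ↔ winner E' L = some i) := by
  match L with
  | [] => simp [winner]
  | u :: rest =>
    simp only [winner, Option.some_inj]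
    apply runAux_imp hEE rest [u] u 0 (by simpa using hN) (List.mem_singleton_self u)
    by_cases hiu : i = u
    · exact Or.inl hiu
    · exact Or.inr (by simpa using hiu)

/-! ### The three orders used by the mechanism -/

def lid (n : ℕ) : List (Fin n) := List.finRange n

def lrev (n : ℕ) : List (Fin n) := (List.finRange n).reverse

def lpred (Sh : Finset (Fin n)) : List (Fin n) :=
  ((List.finRange n).filter (fun x => x ∉ Sh)) ++ ((List.finRange n).filter (fun x => x ∈ Sh))

lemma lid_nodup (n : ℕ) : (lid n).Nodup := List.nodup_finRange n

lemma lrev_nodup (n : ℕ) : (lrev n).Nodup := List.nodup_reverse.mpr (List.nodup_finRange n)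

lemma lpred_nodup (Sh : Finset (Fin n)) : (lpred Sh).Nodup := by
  apply List.Nodup.append ((List.nodup_finRange n).filter _) ((List.nodup_finRange n).filter _)
  intro x hx1 hx2
  simp only [List.mem_filter, decide_eq_true_eq] at hx1 hx2
  exact hx1.2 hx2.2

lemma filter_mem_singleton (s : Fin n) :
    (List.finRange n).filter (fun x => x ∈ ({s} : Finset (Fin n))) = [s] := by
  have h1 : (List.finRange n).filter (fun x => x ∈ ({s} : Finset (Fin n))) =
      (List.finRange n).filter (fun x => x = s) := by
    apply List.filter_congr
    intro x _
    simp
  rw [h1, List.filter_eq,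
    List.count_eq_one_of_mem (List.nodup_finRange n) (List.mem_finRange s)]
  rfl

lemma lpred_singleton (s : Fin n) :
    lpred ({s} : Finset (Fin n)) =
      ((List.finRange n).filter (fun x => x ∉ ({s} : Finset (Fin n)))) ++ s :: [] := by
  rw [lpred, filter_mem_singleton]

/-! ### Indicator bookkeeping -/

noncomputable def ind (o : Option (Fin n)) (i : Fin n) : ℝ := if o = some i then 1 else 0

lemma ind_nonneg (o : Option (Fin n)) (i : Fin n) : 0 ≤ ind o i := by
  unfold ind; split <;> norm_num

lemma ind_le_one (o : Option (Fin n)) (i : Fin n) : ind o i ≤ 1 := by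
  unfold ind; split <;> norm_num

lemma sum_ind_le (o : Option (Fin n)) : ∑ i, ind o i ≤ 1 := by
  cases o with
  | none => simp [ind]
  | some w =>
    have h : ∀ i ∈ Finset.univ, ind (some w) i = if w = i then (1 : ℝ) else 0 := by
      intro i _
      simp [ind, eq_comm]
    rw [Finset.sum_congr rfl h, Finset.sum_ite_eq]
    simp

lemma sum_ind_nonneg (o : Option (Fin n)) : 0 ≤ ∑ i, ind o i :=
  Finset.sum_nonneg (fun i _ => ind_nonneg o i)

lemma sum_ind_mul {o : Option (Fin n)} {w : Fin n} (h : o = some w) (g : Fin n → ℝ) :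
    ∑ i, ind o i * g i = g w := by
  subst h
  have h2 : ∀ i ∈ Finset.univ, ind (some w) i * g i = if w = i then g i else 0 := by
    intro i _
    by_cases hwi : w = i <;> simp [ind, hwi, eq_comm]
  rw [Finset.sum_congr rfl h2, Finset.sum_ite_eq]
  simp

/-! ### The mechanism -/

noncomputable def mech (ρ : ℝ) : Mech := fun n Sh E i =>
  (2 * ρ - 1) * ind (winner E (lpred Sh)) i
    + (1 - ρ) * ind (winner E (lid n)) i
    + (1 - ρ) * ind (winner E (lrev n)) i

lemma winner_exists {E : Finset (Fin n × Fin n)} {L : List (Fin n)} (hL : L ≠ []) :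
    ∃ w, winner E L = some w := by
  match L with
  | [] => exact absurd rfl hL
  | u :: rest => exact ⟨_, rfl⟩

lemma maxDeg_one_eq (E : Finset (Fin n × Fin n)) :
    maxDeg 1 E = Finset.univ.sup (indeg E) := by
  unfold maxDeg
  apply le_antisymm
  · apply Finset.sup_le
    intro S hS
    rw [Finset.mem_powersetCard] at hS
    obtain ⟨a, rfl⟩ := Finset.card_eq_one.mp hS.2
    rw [indegS, Finset.sum_singleton]
    exact Finset.le_sup (Finset.mem_univ a)
  · apply Finset.sup_le
    intro a _
    have h : indeg E a = indegS E {a} := (Finset.sum_singleton _ _).symm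
    rw [h]
    exact Finset.le_sup
      (Finset.mem_powersetCard.mpr ⟨Finset.subset_univ _, Finset.card_singleton a⟩)

lemma value_eq (ρ : ℝ) (n : ℕ) (Sh : Finset (Fin n)) (E : Finset (Fin n × Fin n))
    {w1 w2 w3 : Fin n} (h1 : winner E (lpred Sh) = some w1)
    (h2 : winner E (lid n) = some w2) (h3 : winner E (lrev n) = some w3) :
    ∑ i, mech ρ n Sh E i * (indeg E i : ℝ) =
      (2 * ρ - 1) * (indeg E w1 : ℝ) + (1 - ρ) * (indeg E w2 : ℝ)
        + (1 - ρ) * (indeg E w3 : ℝ) := by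
  unfold mech
  rw [show ∀ a b c : Fin n → ℝ, (∑ i, ((2 * ρ - 1) * a i + (1 - ρ) * b i + (1 - ρ) * c i)
      * (indeg E i : ℝ)) = (2 * ρ - 1) * (∑ i, a i * (indeg E i : ℝ))
      + (1 - ρ) * (∑ i, b i * (indeg E i : ℝ)) + (1 - ρ) * (∑ i, c i * (indeg E i : ℝ))
      from ?_]
  · rw [sum_ind_mul h1, sum_ind_mul h2, sum_ind_mul h3]
  · intro a b c
    rw [Finset.mul_sum, Finset.mul_sum, Finset.mul_sum, ← Finset.sum_add_distrib,
      ← Finset.sum_add_distrib]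
    apply Finset.sum_congr rfl
    intro i _
    ring

/-- The uniform part: the two winners of the identity and the reversed order together
beat any single vertex. -/
lemma two_run_bound {E : Finset (Fin n × Fin n)} (hNL : NoLoops E) (v : Fin n)
    {w2 w3 : Fin n} (h2 : winner E (lid n) = some w2) (h3 : winner E (lrev n) = some w3) :
    indeg E v ≤ indeg E w2 + indeg E w3 := by
  obtain ⟨A, B, hL⟩ := List.append_of_mem (List.mem_finRange v)
  have b2 : scoreIn E A v ≤ indeg E w2 := winner_bound E (lid n) (lid_nodup n) A B v w2 hL h2
  have hLrev : lrev n = B.reverse ++ v :: A.reverse := by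
    rw [lrev, hL]
    simp
  have b3 : scoreIn E B.reverse v ≤ indeg E w3 :=
    winner_bound E (lrev n) (lrev_nodup n) B.reverse A.reverse v w3 hLrev h3
  rw [scoreIn_reverse] at b3
  have hfull : scoreIn E (List.finRange n) v = indeg E v :=
    scoreIn_eq_indeg E (List.nodup_finRange n) v (fun x _ => List.mem_finRange x)
  have hsplit : scoreIn E (List.finRange n) v = scoreIn E A v + scoreIn E B v := by
    rw [hL, scoreIn_append]
    have : scoreIn E (v :: B) v = scoreIn E B v := by
      simp only [scoreIn, List.filter_cons]
      have : ((v, v) ∈ E) = False := by simp [hNL v]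
      simp [this]
    rw [this]
  omega

/-- The prediction part: the winner of the prediction-last order beats the prediction. -/
lemma pred_run_bound {E : Finset (Fin n × Fin n)} (hNL : NoLoops E) (s : Fin n)
    {w1 : Fin n} (h1 : winner E (lpred ({s} : Finset (Fin n))) = some w1) :
    indeg E s ≤ indeg E w1 := by
  set A := (List.finRange n).filter (fun x => x ∉ ({s} : Finset (Fin n))) with hA
  have hL : lpred ({s} : Finset (Fin n)) = A ++ s :: [] := lpred_singleton s
  have b1 : scoreIn E A s ≤ indeg E w1 :=
    winner_bound E _ (lpred_nodup _) A [] s w1 hL h1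
  have hfull : scoreIn E A s = indeg E s := by
    apply scoreIn_eq_indeg E ((List.nodup_finRange n).filter _) s
    intro x hx
    have hxs : x ≠ s := by
      intro h
      exact hNL s (h ▸ hx)
    simp [hA, List.mem_filter, hxs, List.mem_finRange]
  omega

end RhoPerm

/-- For every confidence parameter `ρ ∈ [1/2, 1]`, there exists a randomized 1-selection
mechanism with predictions that is impartial, `ρ`-consistent, and `(1 − ρ)`-robust. -/
theorem rho_permutation_mechanism (ρ : ℝ) (hρ₁ : 1 / 2 ≤ ρ) (hρ₂ : ρ ≤ 1) :
    ∃ f : Mech, ValidMech 1 f ∧ Impartial 1 f ∧ Consistent 1 ρ f ∧ Robust 1 (1 - ρ) f := by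
  open RhoPerm in
  have ha : (0:ℝ) ≤ 2 * ρ - 1 := by linarith
  have hb : (0:ℝ) ≤ 1 - ρ := by linarith
  refine ⟨mech ρ, ?_, ?_, ?_, ?_⟩
  · -- validity
    intro n Sh E _ _
    constructor
    · intro i
      constructor
      · unfold mech
        have := ind_nonneg (winner E (lpred Sh)) i
        have := ind_nonneg (winner E (lid n)) i
        have := ind_nonneg (winner E (lrev n)) i
        positivity
      · unfold mech
        have g1 := ind_le_one (winner E (lpred Sh)) i
        have g2 := ind_le_one (winner E (lid n)) i
        have g3 := ind_le_one (winner E (lrev n)) i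
        have g4 := ind_nonneg (winner E (lpred Sh)) i
        have g5 := ind_nonneg (winner E (lid n)) i
        have g6 := ind_nonneg (winner E (lrev n)) i
        nlinarith
    · have hsum : ∑ i, mech ρ n Sh E i =
          (2 * ρ - 1) * (∑ i, ind (winner E (lpred Sh)) i)
          + (1 - ρ) * (∑ i, ind (winner E (lid n)) i)
          + (1 - ρ) * (∑ i, ind (winner E (lrev n)) i) := by
        unfold mech
        rw [Finset.mul_sum, Finset.mul_sum, Finset.mul_sum, ← Finset.sum_add_distrib,
          ← Finset.sum_add_distrib]
      rw [hsum]
      have g1 := sum_ind_le (winner E (lpred Sh))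
      have g2 := sum_ind_le (winner E (lid n))
      have g3 := sum_ind_le (winner E (lrev n))
      have g4 := sum_ind_nonneg (winner E (lpred Sh))
      have g5 := sum_ind_nonneg (winner E (lid n))
      have g6 := sum_ind_nonneg (winner E (lrev n))
      push_cast
      nlinarith
  · -- impartiality
    intro n Sh E E' i _ _ _ hfil
    have hEE : ∀ x u : Fin n, x ≠ i → ((x, u) ∈ E ↔ (x, u) ∈ E') := by
      intro x u hx
      have h := Finset.ext_iff.mp hfil (x, u)
      simpa [Finset.mem_filter, hx] using h
    unfold mech
    rw [show ind (winner E (lpred Sh)) i = ind (winner E' (lpred Sh)) i from ?_,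
      show ind (winner E (lid n)) i = ind (winner E' (lid n)) i from ?_,
      show ind (winner E (lrev n)) i = ind (winner E' (lrev n)) i from ?_]
    · unfold ind
      exact if_congr (winner_imp hEE (lrev n) (lrev_nodup n)) rfl rfl
    · unfold ind
      exact if_congr (winner_imp hEE (lid n) (lid_nodup n)) rfl rfl
    · unfold ind
      exact if_congr (winner_imp hEE (lpred Sh) (lpred_nodup Sh)) rfl rfl
  · -- consistency
    intro n Sh E hSh hNL hacc
    obtain ⟨sh, rfl⟩ := Finset.card_eq_one.mp hSh
    have hn : 0 < n := sh.pos
    have hDs : indeg E sh = maxDeg 1 E := by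
      rw [← hacc, indegS, Finset.sum_singleton]
    have hne1 : lpred ({sh} : Finset (Fin n)) ≠ [] := by
      intro h
      have : sh ∈ lpred ({sh} : Finset (Fin n)) := by
        rw [lpred_singleton]
        simp
      rw [h] at this
      exact absurd this List.not_mem_nil
    have hne2 : lid n ≠ [] := by
      have : sh ∈ lid n := List.mem_finRange sh
      intro h
      rw [h] at this
      exact absurd this List.not_mem_nil
    have hne3 : lrev n ≠ [] := by
      have : sh ∈ lrev n := by
        rw [lrev, List.mem_reverse]
        exact List.mem_finRange sh
      intro h
      rw [h] at this
      exact absurd this List.not_mem_nil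
    obtain ⟨w1, hw1⟩ := winner_exists (E := E) hne1
    obtain ⟨w2, hw2⟩ := winner_exists (E := E) hne2
    obtain ⟨w3, hw3⟩ := winner_exists (E := E) hne3
    rw [value_eq ρ n _ E hw1 hw2 hw3]
    have b1 : indeg E sh ≤ indeg E w1 := pred_run_bound hNL sh hw1
    have b23 : indeg E sh ≤ indeg E w2 + indeg E w3 := two_run_bound hNL sh hw2 hw3
    have c1 : (maxDeg 1 E : ℝ) ≤ (indeg E w1 : ℝ) := by
      rw [← hDs]; exact_mod_cast b1
    have c23 : (maxDeg 1 E : ℝ) ≤ (indeg E w2 : ℝ) + (indeg E w3 : ℝ) := by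
      rw [← hDs]; exact_mod_cast b23
    have c2 : (0:ℝ) ≤ (indeg E w2 : ℝ) := by positivity
    have c3 : (0:ℝ) ≤ (indeg E w3 : ℝ) := by positivity
    nlinarith
  · -- robustness
    intro n Sh E hSh hNL
    obtain ⟨sh, rfl⟩ := Finset.card_eq_one.mp hSh
    have hn : 0 < n := sh.pos
    obtain ⟨v, _, hv⟩ := Finset.exists_mem_eq_sup (Finset.univ : Finset (Fin n))
      ⟨sh, Finset.mem_univ sh⟩ (indeg E)
    have hDv : maxDeg 1 E = indeg E v := by rw [maxDeg_one_eq]; exact hv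
    have hne1 : lpred ({sh} : Finset (Fin n)) ≠ [] := by
      intro h
      have : sh ∈ lpred ({sh} : Finset (Fin n)) := by
        rw [lpred_singleton]
        simp
      rw [h] at this
      exact absurd this List.not_mem_nil
    have hne2 : lid n ≠ [] := by
      have : sh ∈ lid n := List.mem_finRange sh
      intro h
      rw [h] at this
      exact absurd this List.not_mem_nil
    have hne3 : lrev n ≠ [] := by
      have : sh ∈ lrev n := by
        rw [lrev, List.mem_reverse]
        exact List.mem_finRange sh
      intro h
      rw [h] at this
      exact absurd this List.not_mem_nil
    obtain ⟨w1, hw1⟩ := winner_exists (E := E) hne1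
    obtain ⟨w2, hw2⟩ := winner_exists (E := E) hne2
    obtain ⟨w3, hw3⟩ := winner_exists (E := E) hne3
    rw [value_eq ρ n _ E hw1 hw2 hw3]
    have b23 : indeg E v ≤ indeg E w2 + indeg E w3 := two_run_bound hNL v hw2 hw3
    have c23 : (maxDeg 1 E : ℝ) ≤ (indeg E w2 : ℝ) + (indeg E w3 : ℝ) := by
      rw [hDv]; exact_mod_cast b23
    have c1 : (0:ℝ) ≤ (indeg E w1 : ℝ) := by positivity
    nlinarith
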